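/- Let L : ℝⁿ × ℝⁿ × ℝ → ℝ be continuously differentiable, and let T : ℝⁿ × ℝⁿ × ℝ → ℝ (arguments (q, p, S)) and ℱ^fr : ℝⁿ × ℝⁿ × ℝ → ℝⁿ be given with T > 0 everywhere. On T*𝒬 = ℝⁿ × ℝ × ℝⁿ × ℝ with points z = (q, S, p, Λ), define Δ(z) := {(δq, δS, δp, δΛ) : −T(q, p, S)·δS = ⟨ℱ^fr(q, p, S), δq⟩} and the canonical symplectic form Ω((a, σ, c, λ), (a′, σ′, c′, λ′)) := ⟨a, c′⟩ − ⟨a′, c⟩ + σλ′ − σ′λ. Then a C¹ curve (q(t), S(t), v(t), W(t), p(t), Λ(t)) satisfies the Lagrange-Dirac system [p(t) = (∂L/∂v)(q(t), v(t), S(t)), Λ(t) = 0, and ((q̇, Ṡ, ṗ, Λ̇), (−∂L/∂q, −∂L/∂S, v, W)) ∈ D(Ω, Δ(q, S, p, Λ)) at every t] if and only if for all t: (ṗ − ∂L/∂q(q, v, S))·T(q, p, S) = (Λ̇ − ∂L/∂S(q, v, S))·ℱ^fr(q, p, S), T(q, p, S)·Ṡ = −⟨ℱ^fr(q, p, S),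 q̇⟩, p = (∂L/∂v)(q, v, S), Λ = 0, v = q̇, and W = Ṡ. -/
import Mathlib


open scoped RealInnerProductSpace

noncomputable section

/-- `ℝⁿ` with the Euclidean inner product. -/
abbrev E (n : ℕ) : Type := EuclideanSpace ℝ (Fin n)

/-- The cotangent bundle `T*𝒬` of `𝒬 = ℝⁿ × ℝ`, with points `z = (q, S, p, Λ)`. -/
abbrev CoT (n : ℕ) : Type := E n × ℝ × E n × ℝ

/-- Gradient `∂L/∂q` of the Lagrangian `L(q, v, S)`. -/
noncomputable def gQ {n : ℕ} (L : E n → E n → ℝ → ℝ) (q v : E n) (S : ℝ) : E n :=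
  gradient (fun x => L x v S) q

/-- Gradient `∂L/∂v` of the Lagrangian `L(q, v, S)`. -/
noncomputable def gV {n : ℕ} (L : E n → E n → ℝ → ℝ) (q v : E n) (S : ℝ) : E n :=
  gradient (fun y => L q y S) v

/-- Partial derivative `∂L/∂S` of the Lagrangian `L(q, v, S)`. -/
noncomputable def LS {n : ℕ} (L : E n → E n → ℝ → ℝ) (q v : E n) (S : ℝ) : ℝ :=
  deriv (L q v) S

/-- The Dirac structure induced by a form `ω` and a subspace `Δ`, covectors being
identified with vectors via the pairing `pair` (the Euclidean inner product). -/
def Dirac {F : Type*} (pair ω : F → F → ℝ) (Δ : Set F) : Set (F × F) :=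
  {p | p.1 ∈ Δ ∧ ∀ w ∈ Δ, pair p.2 w = ω p.1 w}

/-- Euclidean pairing on `T*𝒬`. -/
def pair4 {n : ℕ} (ζ w : CoT n) : ℝ :=
  ⟪ζ.1, w.1⟫ + ζ.2.1 * w.2.1 + ⟪ζ.2.2.1, w.2.2.1⟫ + ζ.2.2.2 * w.2.2.2

/-- Canonical symplectic form
`Ω((a,σ,c,λ),(a',σ',c',λ')) = ⟨a,c'⟩ − ⟨a',c⟩ + σλ' − σ'λ` on `T*𝒬`. -/
def Omega4 {n : ℕ} (x y : CoT n) : ℝ :=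
  ⟪x.1, y.2.2.1⟫ - ⟪y.1, x.2.2.1⟫ + x.2.1 * y.2.2.2 - y.2.1 * x.2.2.2

lemma dirac_point_iff {n : ℕ} (A : E n) (B : ℝ) (vv : E n) (W : ℝ) (dq : E n) (dS : ℝ)
    (dp : E n) (dΛ Tt : ℝ) (F : E n) (hTt : 0 < Tt) :
    (((⟨dq, dS, dp, dΛ⟩ : CoT n), (⟨-A, -B, vv, W⟩ : CoT n)) ∈
      Dirac pair4 Omega4 {δ : CoT n | -Tt * δ.2.1 = ⟪F, δ.1⟫}) ↔
    (Tt • (dp - A) = (dΛ - B) • F ∧ Tt * dS = -⟪F, dq⟫ ∧ vv = dq ∧ W = dS) := by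
  constructor
  · rintro ⟨hΔ, hall⟩
    simp only [Set.mem_setOf_eq] at hΔ
    have hv' : vv = dq := by
      have h := hall ⟨0, 0, vv - dq, 0⟩ (by simp)
      simp only [pair4, Omega4, inner_zero_left, inner_zero_right] at h
      have h2 : ⟪vv - dq, vv - dq⟫ = 0 := by
        rw [inner_sub_left]; linarith
      exact sub_eq_zero.mp (inner_self_eq_zero.mp h2)
    have hW' : W = dS := by
      have h := hall ⟨0, 0, 0, W - dS⟩ (by simp)
      simp only [pair4, Omega4, inner_zero_left, inner_zero_right] at h
      nlinarith [h]
    have hmain : Tt • (dp - A) = (dΛ - B) • F := by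
      apply ext_inner_right ℝ
      intro x
      have h := hall ⟨Tt • x, -⟪F, x⟫, 0, 0⟩ (by
        simp only [Set.mem_setOf_eq, real_inner_smul_right]; ring)
      simp only [pair4, Omega4, inner_zero_left, inner_zero_right,
        real_inner_smul_left, real_inner_smul_right, inner_neg_left] at h
      simp only [inner_smul_left, inner_sub_left, conj_trivial]
      have hsym : ⟪x, dp⟫ = ⟪dp, x⟫ := real_inner_comm _ _
      nlinarith [h, hsym]
    refine ⟨hmain, by linarith [hΔ], hv', hW'⟩
  · rintro ⟨hmain, hcon, hv', hW'⟩
    refine ⟨by simp only [Set.mem_setOf_eq]; linarith, ?_⟩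
    rintro ⟨w1, w2, w3, w4⟩ hw
    simp only [Set.mem_setOf_eq] at hw
    simp only [pair4, Omega4, inner_neg_left]
    subst hv' hW'
    have h1 : ⟪Tt • (dp - A), w1⟫ = ⟪(dΛ - B) • F, w1⟫ := by rw [hmain]
    rw [real_inner_smul_left, real_inner_smul_left, inner_sub_left] at h1
    have h2 : Tt * (⟪dp, w1⟫ - ⟪A, w1⟫ + (dΛ - B) * w2) = 0 := by
      have hfw : ⟪F, w1⟫ = -Tt * w2 := hw.symm
      rw [hfw] at h1
      linear_combination h1
    have h3 : ⟪dp, w1⟫ - ⟪A, w1⟫ + (dΛ - B) * w2 = 0 := by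
      rcases mul_eq_zero.mp h2 with h | h
      · exact absurd h (ne_of_gt hTt)
      · exact h
    have hsym : ⟪w1, dp⟫ = ⟪dp, w1⟫ := real_inner_comm _ _
    linarith

/-- the Lagrange-Dirac system on `T*𝒬`, with Dirac differential of the
lifted Lagrangian `(−∂L/∂q, −∂L/∂S, v, W)` based at `(q, S, ∂L/∂v, 0)`, is equivalent
to the implicit differential-algebraic equations. -/
theorem statement12 {n : ℕ} (L : E n → E n → ℝ → ℝ)
    (hL : ContDiff ℝ 1 (fun x : E n × E n × ℝ => L x.1 x.2.1 x.2.2))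
    (Ffr : E n → E n → ℝ → E n)
    (T : E n → E n → ℝ → ℝ) (Ffr' : E n → E n → ℝ → E n)
    (hT : ∀ (q p : E n) (S : ℝ), 0 < T q p S)
    (q v p : ℝ → E n) (S W Λ : ℝ → ℝ)
    (hq : ContDiff ℝ 1 q) (hv : ContDiff ℝ 1 v) (hp : ContDiff ℝ 1 p)
    (hS : ContDiff ℝ 1 S) (hW : ContDiff ℝ 1 W) (hΛ : ContDiff ℝ 1 Λ) :
    (∀ t : ℝ, p t = gV L (q t) (v t) (S t) ∧ Λ t = 0 ∧
      ((⟨deriv q t, deriv S t, deriv p t, deriv Λ t⟩ : CoT n),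
       (⟨-(gQ L (q t) (v t) (S t)), -(LS L (q t) (v t) (S t)), v t, W t⟩ : CoT n)) ∈
        Dirac pair4 Omega4
          {δ : CoT n |
            -(T (q t) (p t) (S t)) * δ.2.1 = ⟪Ffr' (q t) (p t) (S t), δ.1⟫}) ↔
    (∀ t : ℝ,
      T (q t) (p t) (S t) • (deriv p t - gQ L (q t) (v t) (S t)) =
        (deriv Λ t - LS L (q t) (v t) (S t)) • Ffr' (q t) (p t) (S t) ∧
      T (q t) (p t) (S t) * deriv S t = -⟪Ffr' (q t) (p t) (S t), deriv q t⟫ ∧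
      p t = gV L (q t) (v t) (S t) ∧ Λ t = 0 ∧
      v t = deriv q t ∧ W t = deriv S t) := by
  constructor
  · intro h t
    obtain ⟨hp0, hΛ0, hd⟩ := h t
    obtain ⟨hmain, hcon, hv', hW'⟩ := (dirac_point_iff _ _ _ _ _ _ _ _ _ _
      (hT (q t) (p t) (S t))).mp hd
    exact ⟨hmain, hcon, hp0, hΛ0, hv', hW'⟩
  · intro h t
    obtain ⟨hmain, hcon, hp0, hΛ0, hv', hW'⟩ := h t
    exact ⟨hp0, hΛ0, (dirac_point_iff _ _ _ _ _ _ _ _ _ _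
      (hT (q t) (p t) (S t))).mpr ⟨hmain, hcon, hv', hW'⟩⟩

end
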